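/- arXiv:1706.03240 — 6 statements merged into one kernel-verified Lean document; each statement's English description precedes it below -/
import Mathlib

section
/- In the quotient ring R = (Z/2)[x,y,z]/I where I is the ideal generated by (x^3*y + y*z^3, y^3 + y*z^2, y^2*z + z^3, x*z, x^4), the image of x satisfies x^4 = 0 but x^3 ≠ 0; that is, the order of x (the least k with x^k ∈ I) equals 4. -/
open MvPolynomial

/-- In `(Z/2)[x,y,z]/I` with `I = (x³y+yz³, y³+yz², y²z+z³, xz, x⁴)` (case A₉),
`x⁴ = 0` but `x³ ≠ 0`: the order of `x` is 4. Here `x = X 0`, `y = X 1`, `z = X 2`. -/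
theorem stmt_5 (I : Ideal (MvPolynomial (Fin 3) (ZMod 2)))
    (hI : I = Ideal.span {X 0 ^ 3 * X 1 + X 1 * X 2 ^ 3, X 1 ^ 3 + X 1 * X 2 ^ 2,
      X 1 ^ 2 * X 2 + X 2 ^ 3, X 0 * X 2, X 0 ^ 4}) :
    (X 0 : MvPolynomial (Fin 3) (ZMod 2)) ^ 4 ∈ I ∧
    (X 0 : MvPolynomial (Fin 3) (ZMod 2)) ^ 3 ∉ I ∧
    IsLeast {k : ℕ | (X 0 : MvPolynomial (Fin 3) (ZMod 2)) ^ k ∈ I} 4 := by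
  have h4 : (X 0 : MvPolynomial (Fin 3) (ZMod 2)) ^ 4 ∈ I := by
    rw [hI]; exact Ideal.subset_span (by simp)
  -- evaluation x ↦ X, y ↦ 0, z ↦ 0 into (ZMod 2)[X]
  set f : Fin 3 → Polynomial (ZMod 2) := ![Polynomial.X, 0, 0] with hf
  have hle : I ≤ Ideal.comap (aeval f)
      (Ideal.span {(Polynomial.X : Polynomial (ZMod 2)) ^ 4}) := by
    rw [hI, Ideal.span_le]
    rintro p (rfl | rfl | rfl | rfl | rfl) <;>
      · simp only [Ideal.mem_comap, map_add, map_mul, map_pow, aeval_X, hf]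
        simp [Ideal.mem_span_singleton]
  have key : ∀ k : ℕ, k < 4 → (X 0 : MvPolynomial (Fin 3) (ZMod 2)) ^ k ∉ I := by
    intro k hk hmem
    have := hle hmem
    rw [Ideal.mem_comap, map_pow, aeval_X] at this
    have hdvd : (Polynomial.X : Polynomial (ZMod 2)) ^ 4 ∣ Polynomial.X ^ k := by
      rwa [Ideal.mem_span_singleton] at this
    rw [Polynomial.X_pow_dvd_iff] at hdvd
    have := hdvd k hk
    simp [Polynomial.coeff_X_pow] at this
  refine ⟨h4, key 3 (by norm_num), ⟨h4, ?_⟩⟩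
  intro k hk
  by_contra h
  exact key k (by omega) hk
end

section
/- In the quotient ring R = (Z/2)[x,y,z]/I where I is generated by (x^2*y^2 + y^2*z^2, y^4 + y^2*z^2, y^2*z + z^3, x*z, x^3), the image of x satisfies x^3 = 0 but x^2 ≠ 0; that is, the order of x equals 3. -/
/-!
Send `x ↦ X` and `y, z ↦ 0` into `(Z/2)[X]`. Every generator of `I` other than `x³` contains `y` or `z`,
so `I` lands in the ideal `(X³)`; since `X³ ∤ X²`, no power of `x` below the third lies in `I`.
-/

open MvPolynomial

section

variable {R σ : Type*} [CommRing R] [DecidableEq σ]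

noncomputable abbrev specializeAt (i : σ) : MvPolynomial σ R →ₐ[R] Polynomial R :=
  aeval (Pi.single i Polynomial.X)

theorem le_of_X_pow_mem_of_le_comap_specializeAt [Nontrivial R] {I : Ideal (MvPolynomial σ R)}
    {i : σ} {n k : ℕ}
    (hI : I ≤ (Ideal.span {(Polynomial.X : Polynomial R) ^ n}).comap (specializeAt i))
    (hk : X i ^ k ∈ I) : n ≤ k := by
  have hdvd : (Polynomial.X : Polynomial R) ^ n ∣ Polynomial.X ^ k := by
    simpa [Ideal.mem_span_singleton] using hI hk
  by_contra! hlt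
  simpa using Polynomial.X_pow_dvd_iff.mp hdvd k hlt

end

/-- In `(Z/2)[x,y,z]/I` with `I = (x²y²+y²z², y⁴+y²z², y²z+z³, xz, x³)` (case B₁),
`x³ = 0` but `x² ≠ 0`: the order of `x` is 3. Here `x = X 0`, `y = X 1`, `z = X 2`. -/
theorem stmt_7 (I : Ideal (MvPolynomial (Fin 3) (ZMod 2)))
    (hI : I = Ideal.span {X 0 ^ 2 * X 1 ^ 2 + X 1 ^ 2 * X 2 ^ 2,
      X 1 ^ 4 + X 1 ^ 2 * X 2 ^ 2, X 1 ^ 2 * X 2 + X 2 ^ 3, X 0 * X 2, X 0 ^ 3}) :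
    (X 0 : MvPolynomial (Fin 3) (ZMod 2)) ^ 3 ∈ I ∧
    (X 0 : MvPolynomial (Fin 3) (ZMod 2)) ^ 2 ∉ I ∧
    IsLeast {k : ℕ | (X 0 : MvPolynomial (Fin 3) (ZMod 2)) ^ k ∈ I} 3 := by
  have hcube : (X 0 : MvPolynomial (Fin 3) (ZMod 2)) ^ 3 ∈ I := hI ▸ Ideal.subset_span (by simp)
  have hle : I ≤ (Ideal.span {(Polynomial.X : Polynomial (ZMod 2)) ^ 3}).comap (specializeAt 0) := by
    rw [hI, Ideal.span_le]
    rintro p (rfl | rfl | rfl | rfl | rfl) <;> simp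
  have hlower (k : ℕ) (hk : X 0 ^ k ∈ I) : 3 ≤ k :=
    le_of_X_pow_mem_of_le_comap_specializeAt hle hk
  exact ⟨hcube, fun h => absurd (hlower 2 h) (by norm_num), hcube, hlower⟩
end

section
/- In the quotient ring R = (Z/2)[x,y,z]/I with I generated by (x^2*y^2 + x*y^3 + y^4, x^2*y + y*z^2, z^3, x*z, x^4 + y^4), the image of z satisfies z^3 = 0 and z^2 ≠ 0, i.e. the order of z is 3, while the order of x is at least 6, i.e. x^5 ∉ I. -/
open MvPolynomial

namespace Stmt10Aux

/-- exponent vector -/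
noncomputable def e (a b c : ℕ) : Fin 3 →₀ ℕ :=
  Finsupp.single 0 a + Finsupp.single 1 b + Finsupp.single 2 c

lemma e_apply (a b c : ℕ) (i : Fin 3) :
    e a b c i = ![a, b, c] i := by
  fin_cases i <;> simp [e, Finsupp.single_apply]

lemma e_le {a b c a' b' c' : ℕ} :
    e a b c ≤ e a' b' c' ↔ a ≤ a' ∧ b ≤ b' ∧ c ≤ c' := by
  rw [Finsupp.le_def]
  constructor
  · intro h
    exact ⟨by simpa [e_apply] using h 0, by simpa [e_apply] using h 1,
      by simpa [e_apply] using h 2⟩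
  · rintro ⟨h1, h2, h3⟩ i
    fin_cases i <;> simpa [e_apply]

lemma e_eq {a b c a' b' c' : ℕ} :
    e a b c = e a' b' c' ↔ a = a' ∧ b = b' ∧ c = c' := by
  constructor
  · intro h
    refine ⟨?_, ?_, ?_⟩
    · simpa [e_apply] using DFunLike.congr_fun h 0
    · simpa [e_apply] using DFunLike.congr_fun h 1
    · simpa [e_apply] using DFunLike.congr_fun h 2
  · rintro ⟨rfl, rfl, rfl⟩; rfl

lemma e_sub (a b c a' b' c' : ℕ) :
    e a b c - e a' b' c' = e (a - a') (b - b') (c - c') := by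
  ext i
  fin_cases i <;> simp [e_apply, Finsupp.tsub_apply]

lemma single0 (a : ℕ) : Finsupp.single (0 : Fin 3) a = e a 0 0 := by
  simp [e]

lemma single2 (c : ℕ) : Finsupp.single (2 : Fin 3) c = e 0 0 c := by
  simp [e]

lemma mono_eq (a b c : ℕ) :
    (X 0 ^ a * X 1 ^ b * X 2 ^ c : MvPolynomial (Fin 3) (ZMod 2)) =
      monomial (e a b c) 1 := by
  simp [X_pow_eq_monomial, monomial_mul, e]

/-- the degree-5 dual functional -/
noncomputable def L (p : MvPolynomial (Fin 3) (ZMod 2)) : ZMod 2 :=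
  coeff (e 5 0 0) p + coeff (e 2 3 0) p + coeff (e 1 4 0) p + coeff (e 0 3 2) p

/-- the degree-2 dual functional -/
noncomputable def L2 (p : MvPolynomial (Fin 3) (ZMod 2)) : ZMod 2 :=
  coeff (e 0 0 2) p

lemma L_add (p q) : L (p + q) = L p + L q := by
  simp only [L, coeff_add]; ring

lemma L2_add (p q) : L2 (p + q) = L2 p + L2 q := by
  simp only [L2, coeff_add]

lemma g1_eq : (X 0 ^ 2 * X 1 ^ 2 + X 0 * X 1 ^ 3 + X 1 ^ 4 :
    MvPolynomial (Fin 3) (ZMod 2)) =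
    monomial (e 2 2 0) 1 + monomial (e 1 3 0) 1 + monomial (e 0 4 0) 1 := by
  rw [← mono_eq 2 2 0, ← mono_eq 1 3 0, ← mono_eq 0 4 0]; ring

lemma g2_eq : (X 0 ^ 2 * X 1 + X 1 * X 2 ^ 2 :
    MvPolynomial (Fin 3) (ZMod 2)) =
    monomial (e 2 1 0) 1 + monomial (e 0 1 2) 1 := by
  rw [← mono_eq 2 1 0, ← mono_eq 0 1 2]; ring

lemma g3_eq : (X 2 ^ 3 : MvPolynomial (Fin 3) (ZMod 2)) = monomial (e 0 0 3) 1 := by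
  rw [← mono_eq 0 0 3]; ring

lemma g4_eq : (X 0 * X 2 : MvPolynomial (Fin 3) (ZMod 2)) = monomial (e 1 0 1) 1 := by
  rw [← mono_eq 1 0 1]; ring

lemma g5_eq : (X 0 ^ 4 + X 1 ^ 4 : MvPolynomial (Fin 3) (ZMod 2)) =
    monomial (e 4 0 0) 1 + monomial (e 0 4 0) 1 := by
  rw [← mono_eq 4 0 0, ← mono_eq 0 4 0]; ring

lemma L_g1 (q : MvPolynomial (Fin 3) (ZMod 2)) :
    L (q * (X 0 ^ 2 * X 1 ^ 2 + X 0 * X 1 ^ 3 + X 1 ^ 4)) = 0 := by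
  rw [g1_eq]
  simp only [L, mul_add, coeff_add, coeff_mul_monomial', mul_one, e_le, e_sub]
  norm_num
  ring_nf
  simp [show (2 : ZMod 2) = 0 from rfl]

lemma L_g2 (q : MvPolynomial (Fin 3) (ZMod 2)) :
    L (q * (X 0 ^ 2 * X 1 + X 1 * X 2 ^ 2)) = 0 := by
  rw [g2_eq]
  simp only [L, mul_add, coeff_add, coeff_mul_monomial', mul_one, e_le, e_sub]
  norm_num
  ring_nf
  simp [show (2 : ZMod 2) = 0 from rfl]

lemma L_g3 (q : MvPolynomial (Fin 3) (ZMod 2)) :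
    L (q * (X 2 ^ 3)) = 0 := by
  rw [g3_eq]
  simp only [L, coeff_mul_monomial', mul_one, e_le, e_sub]
  norm_num

lemma L_g4 (q : MvPolynomial (Fin 3) (ZMod 2)) :
    L (q * (X 0 * X 2)) = 0 := by
  rw [g4_eq]
  simp only [L, coeff_mul_monomial', mul_one, e_le, e_sub]
  norm_num

lemma L_g5 (q : MvPolynomial (Fin 3) (ZMod 2)) :
    L (q * (X 0 ^ 4 + X 1 ^ 4)) = 0 := by
  rw [g5_eq]
  simp only [L, mul_add, coeff_add, coeff_mul_monomial', mul_one, e_le, e_sub]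
  norm_num
  ring_nf
  simp [show (2 : ZMod 2) = 0 from rfl]

lemma L2_g1 (q : MvPolynomial (Fin 3) (ZMod 2)) :
    L2 (q * (X 0 ^ 2 * X 1 ^ 2 + X 0 * X 1 ^ 3 + X 1 ^ 4)) = 0 := by
  rw [g1_eq]
  simp only [L2, mul_add, coeff_add, coeff_mul_monomial', mul_one, e_le]
  norm_num

lemma L2_g2 (q : MvPolynomial (Fin 3) (ZMod 2)) :
    L2 (q * (X 0 ^ 2 * X 1 + X 1 * X 2 ^ 2)) = 0 := by
  rw [g2_eq]
  simp only [L2, mul_add, coeff_add, coeff_mul_monomial', mul_one, e_le]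
  norm_num

lemma L2_g3 (q : MvPolynomial (Fin 3) (ZMod 2)) :
    L2 (q * (X 2 ^ 3)) = 0 := by
  rw [g3_eq]
  simp only [L2, coeff_mul_monomial', mul_one, e_le]
  norm_num

lemma L2_g4 (q : MvPolynomial (Fin 3) (ZMod 2)) :
    L2 (q * (X 0 * X 2)) = 0 := by
  rw [g4_eq]
  simp only [L2, coeff_mul_monomial', mul_one, e_le]
  norm_num

lemma L2_g5 (q : MvPolynomial (Fin 3) (ZMod 2)) :
    L2 (q * (X 0 ^ 4 + X 1 ^ 4)) = 0 := by
  rw [g5_eq]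
  simp only [L2, mul_add, coeff_add, coeff_mul_monomial', mul_one, e_le]
  norm_num

lemma L_vanishes {p : MvPolynomial (Fin 3) (ZMod 2)}
    (hp : p ∈ Ideal.span {X 0 ^ 2 * X 1 ^ 2 + X 0 * X 1 ^ 3 + X 1 ^ 4,
      X 0 ^ 2 * X 1 + X 1 * X 2 ^ 2, X 2 ^ 3, X 0 * X 2, X 0 ^ 4 + X 1 ^ 4}) :
    ∀ q, L (q * p) = 0 := by
  refine Submodule.span_induction ?_ ?_ ?_ ?_ hp
  · intro x hx
    simp only [Set.mem_insert_iff, Set.mem_singleton_iff] at hx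
    rcases hx with rfl | rfl | rfl | rfl | rfl
    · exact L_g1
    · exact L_g2
    · exact L_g3
    · exact L_g4
    · exact L_g5
  · intro q; simp [L]
  · intro a b _ _ ha hb q
    rw [mul_add, L_add, ha q, hb q, add_zero]
  · intro a x _ hx q
    rw [smul_eq_mul, ← mul_assoc]
    exact hx (q * a)

lemma L2_vanishes {p : MvPolynomial (Fin 3) (ZMod 2)}
    (hp : p ∈ Ideal.span {X 0 ^ 2 * X 1 ^ 2 + X 0 * X 1 ^ 3 + X 1 ^ 4,
      X 0 ^ 2 * X 1 + X 1 * X 2 ^ 2, X 2 ^ 3, X 0 * X 2, X 0 ^ 4 + X 1 ^ 4}) :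
    ∀ q, L2 (q * p) = 0 := by
  refine Submodule.span_induction ?_ ?_ ?_ ?_ hp
  · intro x hx
    simp only [Set.mem_insert_iff, Set.mem_singleton_iff] at hx
    rcases hx with rfl | rfl | rfl | rfl | rfl
    · exact L2_g1
    · exact L2_g2
    · exact L2_g3
    · exact L2_g4
    · exact L2_g5
  · intro q; simp [L2]
  · intro a b _ _ ha hb q
    rw [mul_add, L2_add, ha q, hb q, add_zero]
  · intro a x _ hx q
    rw [smul_eq_mul, ← mul_assoc]
    exact hx (q * a)

lemma L_x5 : L ((X 0 : MvPolynomial (Fin 3) (ZMod 2)) ^ 5) = 1 := by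
  simp only [L, coeff_X_pow, single0, e_eq]
  norm_num

lemma L2_z2 : L2 ((X 2 : MvPolynomial (Fin 3) (ZMod 2)) ^ 2) = 1 := by
  simp only [L2, coeff_X_pow, single2, e_eq]
  norm_num

end Stmt10Aux

/-- In `(Z/2)[x,y,z]` with `I = (x²y²+xy³+y⁴, x²y+yz², z³, xz, x⁴+y⁴)` (case A₁₄),
the order of `z` is 3 (`z³ ∈ I`, `z² ∉ I`) while the order of `x` is at least 6
(`x⁵ ∉ I`). Here `x = X 0`, `y = X 1`, `z = X 2`. -/
theorem stmt_10 (I : Ideal (MvPolynomial (Fin 3) (ZMod 2)))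
    (hI : I = Ideal.span {X 0 ^ 2 * X 1 ^ 2 + X 0 * X 1 ^ 3 + X 1 ^ 4,
      X 0 ^ 2 * X 1 + X 1 * X 2 ^ 2, X 2 ^ 3, X 0 * X 2, X 0 ^ 4 + X 1 ^ 4}) :
    (X 2 : MvPolynomial (Fin 3) (ZMod 2)) ^ 3 ∈ I ∧
    (X 2 : MvPolynomial (Fin 3) (ZMod 2)) ^ 2 ∉ I ∧
    (X 0 : MvPolynomial (Fin 3) (ZMod 2)) ^ 5 ∉ I := by
  subst hI
  refine ⟨?_, ?_, ?_⟩
  · exact Ideal.subset_span (by simp)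
  · intro h
    have := Stmt10Aux.L2_vanishes h 1
    rw [one_mul, Stmt10Aux.L2_z2] at this
    exact one_ne_zero this
  · intro h
    have := Stmt10Aux.L_vanishes h 1
    rw [one_mul, Stmt10Aux.L_x5] at this
    exact one_ne_zero this
end

section
/- Let P be the simple polytope represented on a regular (2k+1)-gon with assigned positive integers [a_1,…,a_{2k+1}] summing to n+3. Then β^{-1,2j}(P) equals the number of indices i ∈ {1,…,2k+1} such that a_i + a_{i+1} + ⋯ + a_{i+k-1} = j, where indices are taken modulo 2k+1. -/
noncomputable section

open scoped Classical

/-- The `i`-th vertex of the regular `(2k+1)`-gon centered at the origin of `ℝ²`. -/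
def gonPt (k : ℕ) (i : Fin (2 * k + 1)) : ℝ × ℝ :=
  (Real.cos (2 * Real.pi * i / (2 * k + 1)), Real.sin (2 * Real.pi * i / (2 * k + 1)))

/-- The facets of the polytope given by the Gale diagram assigning `a i` facets
to the `i`-th vertex of the regular `(2k+1)`-gon. -/
abbrev GaleFacet (k : ℕ) (a : ℕ → ℕ) := Σ i : Fin (2 * k + 1), Fin (a i.val)

/-- `S` is a non-face of the simplicial complex of the Gale diagram: the origin
is not in the convex hull of the points assigned to the complementary facets. -/
def GaleNonface (k : ℕ) (a : ℕ → ℕ) (S : Finset (GaleFacet k a)) : Prop :=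
  (0 : ℝ × ℝ) ∉ convexHull ℝ ((fun x : GaleFacet k a => gonPt k x.1) '' {x | x ∉ S})

/-- `S` is a minimal non-face: it is a non-face and no proper subset is. -/
def GaleMinNonface (k : ℕ) (a : ℕ → ℕ) (S : Finset (GaleFacet k a)) : Prop :=
  GaleNonface k a S ∧ ∀ T ⊂ S, ¬ GaleNonface k a T

/-- `β^{-1,2j}` of the polytope of the Gale diagram: the number of monomials of
degree `2j` in a minimal generating set of its Stanley–Reisner ideal, i.e. the
number of minimal non-faces of cardinality `j`. -/
def galeBetti1 (k : ℕ) (a : ℕ → ℕ) (j : ℕ) : ℕ :=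
  {S : Finset (GaleFacet k a) | GaleMinNonface k a S ∧ S.card = j}.ncard

/-!
A set `S` of facets is a non-face iff the vertices carrying facets outside `S` lie in an open
half-plane through the origin (Hahn–Banach in one direction, an explicit functional in the
other). For the regular `(2k+1)`-gon this means that they avoid `k` consecutive vertices, so the
minimal non-faces are exactly the sets of all facets at `k` consecutive vertices `i, …, i+k-1`.
Since every `a_i` is positive, distinct arcs give distinct such sets, of cardinality
`a_i + ⋯ + a_{i+k-1}`.
-/

open Finset Real

section Arc

variable {k : ℕ}

def gonArc (k i : ℕ) : Finset (Fin (2 * k + 1)) :=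
  (range k).image fun t => Fin.ofNat _ (i + t)

lemma mem_gonArc {i : ℕ} {v : Fin (2 * k + 1)} :
    v ∈ gonArc k i ↔ ∃ t < k, Fin.ofNat _ (i + t) = v := by
  simp [gonArc]

lemma ofNat_add_injOn (i : ℕ) :
    Set.InjOn (fun t => Fin.ofNat (2 * k + 1) (i + t)) (range k) := by
  intro t ht t' ht' h
  simp only [coe_range, Set.mem_Iio] at ht ht'
  have h' : i + t ≡ i + t' [MOD 2 * k + 1] := Fin.ext_iff.1 h
  exact (Nat.ModEq.add_left_cancel' i h').eq_of_lt_of_lt (by omega) (by omega)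

lemma card_gonArc (i : ℕ) : #(gonArc k i) = k := by
  rw [gonArc, card_image_of_injOn (ofNat_add_injOn i), card_range]

lemma sum_gonArc (i : ℕ) (f : Fin (2 * k + 1) → ℕ) :
    ∑ v ∈ gonArc k i, f v = ∑ t ∈ range k, f (Fin.ofNat _ (i + t)) :=
  sum_image (ofNat_add_injOn i)

lemma gonArc_mod (i : ℕ) : gonArc k (i % (2 * k + 1)) = gonArc k i := by
  ext v
  simp only [mem_gonArc, Fin.ext_iff, Fin.val_ofNat, Nat.mod_add_mod]

lemma exists_ofNat_add_eq (i : ℕ) (v : Fin (2 * k + 1)) :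
    ∃ s < 2 * k + 1, Fin.ofNat _ (i + s) = v := by
  refine ⟨(v + 2 * k * i) % (2 * k + 1), Nat.mod_lt _ (by omega), ?_⟩
  ext
  rw [Fin.val_ofNat, Nat.add_mod_mod, show i + (v + 2 * k * i) = v + i * (2 * k + 1) by ring,
    Nat.add_mul_mod_self_right, Nat.mod_eq_of_lt v.isLt]

lemma eq_of_gonArc_eq {i i' : ℕ} (hi : i < 2 * k + 1) (hi' : i' < 2 * k + 1)
    (h : gonArc k i = gonArc k i') : i = i' := by
  rcases Nat.eq_zero_or_pos k with rfl | hk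
  · omega
  have start_mem (j : ℕ) : Fin.ofNat _ (j + 0) ∈ gonArc k j := mem_gonArc.2 ⟨0, hk, rfl⟩
  obtain ⟨d, hd, hdi⟩ := mem_gonArc.1 (h ▸ start_mem i)
  obtain ⟨d', hd', hdi'⟩ := mem_gonArc.1 (h.symm ▸ start_mem i')
  have e : i' + d ≡ i [MOD 2 * k + 1] := by
    simpa [Fin.ext_iff, Nat.ModEq, Nat.mod_eq_of_lt hi] using hdi
  have e' : i + d' ≡ i' [MOD 2 * k + 1] := by
    simpa [Fin.ext_iff, Nat.ModEq, Nat.mod_eq_of_lt hi'] using hdi'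
  have round_trip : i + (d' + d) ≡ i + 0 [MOD 2 * k + 1] := by
    rw [← add_assoc]
    exact (e'.add_right d).trans e
  have hd0 : d' + d = 0 :=
    (Nat.ModEq.add_left_cancel' i round_trip).eq_of_lt_of_lt (by omega) (by omega)
  simpa [Nat.ModEq, show d = 0 by omega, Nat.mod_eq_of_lt hi, Nat.mod_eq_of_lt hi'] using e.symm

end Arc

section Geometry

variable {k : ℕ}
lemma gonPt_ofNat (m : ℕ) :
    gonPt k (Fin.ofNat _ m) = (cos (2 * π * m / (2 * k + 1)), sin (2 * π * m / (2 * k + 1))) := by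
  have hN : (2 * k + 1 : ℝ) ≠ 0 := by positivity
  have angle : 2 * π * ((m % (2 * k + 1) : ℕ) : ℝ) / (2 * k + 1) =
      2 * π * m / (2 * k + 1) - (m / (2 * k + 1) : ℕ) * (2 * π) := by
    have := congrArg (Nat.cast : ℕ → ℝ) (Nat.mod_add_div m (2 * k + 1))
    push_cast at this
    rw [eq_sub_iff_add_eq, ← this]
    field_simp
  simp only [gonPt, Fin.val_ofNat, angle, cos_sub_nat_mul_two_pi, sin_sub_nat_mul_two_pi]

lemma zero_notMem_convexHull_of_pos {E : Type*} [AddCommGroup E] [Module ℝ E] {s : Set E}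
    (f : E →ₗ[ℝ] ℝ) (h : ∀ x ∈ s, 0 < f x) : (0 : E) ∉ convexHull ℝ s := fun h0 => by
  have : 0 < f 0 := convexHull_min h (convex_halfSpace_gt f.isLinear 0) h0
  simp at this

lemma exists_polar (f : ℝ × ℝ →ₗ[ℝ] ℝ) :
    ∃ r ≥ (0 : ℝ), ∃ θ, ∀ α, f (cos α, sin α) = r * cos (α - θ) := by
  let z : ℂ := ⟨f (1, 0), f (0, 1)⟩
  refine ⟨‖z‖, norm_nonneg z, z.arg, fun α => ?_⟩
  have hα : ((cos α, sin α) : ℝ × ℝ) = cos α • (1, 0) + sin α • (0, 1) := by ext <;> simp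
  rw [hα, map_add, map_smul, map_smul, cos_sub, smul_eq_mul, smul_eq_mul]
  have hre : ‖z‖ * cos z.arg = f (1, 0) := Complex.norm_mul_cos_arg z
  have him : ‖z‖ * sin z.arg = f (0, 1) := Complex.norm_mul_sin_arg z
  linear_combination -cos α * hre - sin α * him

lemma zero_notMem_convexHull_of_disjoint_gonArc (i : ℕ) {W : Set (Fin (2 * k + 1))}
    (hW : ∀ v ∈ gonArc k i, v ∉ W) : (0 : ℝ × ℝ) ∉ convexHull ℝ (gonPt k '' W) := by
  -- `θ` points at the middle of the complementary arc `i + k, …, i + 2k`, whose angular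
  -- half-width `π k / (2k+1)` is less than `π / 2`.
  set θ : ℝ := π * (2 * i + 3 * k) / (2 * k + 1)
  refine zero_notMem_convexHull_of_pos
    (cos θ • LinearMap.fst ℝ ℝ ℝ + sin θ • LinearMap.snd ℝ ℝ ℝ) ?_
  rintro _ ⟨v, hv, rfl⟩
  obtain ⟨s, hs, rfl⟩ := exists_ofNat_add_eq i v
  have hks : k ≤ s := by
    by_contra! hsk
    exact hW _ (mem_gonArc.2 ⟨s, hsk, rfl⟩) hv
  have hangle :
      2 * π * ((i + s : ℕ) : ℝ) / (2 * k + 1) - θ = π * (2 * s - 3 * k) / (2 * k + 1) := by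
    simp only [θ]
    field_simp
    push_cast
    ring
  have hk : (k : ℝ) ≤ s := by exact_mod_cast hks
  have hs' : (s : ℝ) ≤ 2 * k := by exact_mod_cast (show s ≤ 2 * k by omega)
  have hN : (0 : ℝ) < 2 * k + 1 := by positivity
  simp only [LinearMap.add_apply, LinearMap.smul_apply, LinearMap.fst_apply,
    LinearMap.snd_apply, smul_eq_mul, gonPt_ofNat]
  rw [mul_comm (cos θ), mul_comm (sin θ), ← cos_sub, hangle]
  apply cos_pos_of_mem_Ioo
  constructor
  · rw [lt_div_iff₀ hN]; nlinarith [pi_pos]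
  · rw [div_lt_iff₀ hN]; nlinarith [pi_pos]

lemma exists_cos_nonpos_of_nonneg {θ : ℝ} (hθ : 0 ≤ θ) :
    ∃ i : ℕ, ∀ t < k, cos (2 * π * (i + t : ℕ) / (2 * k + 1) - θ) ≤ 0 := by
  have hN : (0 : ℝ) < 2 * k + 1 := by positivity
  set A : ℝ := (2 * k + 1) * (θ + π / 2) / (2 * π)
  have hA : A * (2 * π) = (2 * k + 1) * (θ + π / 2) := by
    simp only [A]; field_simp
  have hA0 : 0 ≤ A := by positivity
  -- `⌈A⌉₊` is the first vertex at angle `≥ θ + π / 2`, and `k - 1` further steps of `2π / (2k+1)`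
  -- stay below `θ + 3π / 2`.
  refine ⟨⌈A⌉₊, fun t ht => cos_nonpos_of_pi_div_two_le_of_le ?_ ?_⟩
  · have hi : A ≤ ⌈A⌉₊ := Nat.le_ceil A
    rw [le_sub_iff_add_le, le_div_iff₀ hN]
    push_cast
    nlinarith [mul_nonneg pi_pos.le (sub_nonneg.2 hi),
      mul_nonneg pi_pos.le (Nat.cast_nonneg (α := ℝ) t)]
  · have hi : (⌈A⌉₊ : ℝ) < A + 1 := Nat.ceil_lt_add_one hA0
    have ht' : (t : ℝ) + 1 ≤ k := by exact_mod_cast ht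
    rw [sub_le_iff_le_add, div_le_iff₀ hN]
    push_cast
    nlinarith [mul_nonneg pi_pos.le (sub_nonneg.2 hi.le),
      mul_nonneg pi_pos.le (sub_nonneg.2 ht')]

lemma exists_cos_nonpos (θ : ℝ) :
    ∃ i : ℕ, ∀ t < k, cos (2 * π * (i + t : ℕ) / (2 * k + 1) - θ) ≤ 0 := by
  obtain ⟨M, hM⟩ := exists_nat_ge (-θ / (2 * π))
  have hθ : 0 ≤ θ + M * (2 * π) := by
    rw [div_le_iff₀ two_pi_pos] at hM
    linarith
  obtain ⟨i, hi⟩ := exists_cos_nonpos_of_nonneg (k := k) hθ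
  refine ⟨i, fun t ht => ?_⟩
  simpa [sub_add_eq_sub_sub, cos_sub_nat_mul_two_pi] using hi t ht

lemma exists_disjoint_gonArc_of_zero_notMem_convexHull {W : Set (Fin (2 * k + 1))}
    (h0 : (0 : ℝ × ℝ) ∉ convexHull ℝ (gonPt k '' W)) : ∃ i, ∀ v ∈ gonArc k i, v ∉ W := by
  obtain ⟨f, u, hu, hf⟩ := geometric_hahn_banach_point_closed (convex_convexHull ℝ _)
    ((W.toFinite.image _).isClosed_convexHull (𝕜 := ℝ)) h0
  obtain ⟨r, hr, θ, hpolar⟩ := exists_polar (f : ℝ × ℝ →ₗ[ℝ] ℝ)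
  obtain ⟨i, hi⟩ := exists_cos_nonpos (k := k) θ
  refine ⟨i, fun v hv hvW => ?_⟩
  obtain ⟨t, ht, rfl⟩ := mem_gonArc.1 hv
  have hpos := hf _ (subset_convexHull ℝ _ ⟨_, hvW, rfl⟩)
  have hnonpos : f (gonPt k (Fin.ofNat _ (i + t))) ≤ 0 := by
    rw [gonPt_ofNat]
    exact (hpolar _).trans_le (mul_nonpos_of_nonneg_of_nonpos hr (hi t ht))
  rw [map_zero] at hu
  linarith

end Geometry

section Facets

variable {k : ℕ} {a : ℕ → ℕ}

def arcFacets (k : ℕ) (a : ℕ → ℕ) (i : ℕ) : Finset (GaleFacet k a) :=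
  (gonArc k i).sigma fun _ => univ

lemma mem_arcFacets {i : ℕ} {x : GaleFacet k a} : x ∈ arcFacets k a i ↔ x.1 ∈ gonArc k i := by
  simp [arcFacets]

lemma card_arcFacets (i : ℕ) :
    #(arcFacets k a i) = ∑ t ∈ range k, a ((i + t) % (2 * k + 1)) := by
  simp [arcFacets, sum_gonArc]

lemma galeNonface_iff (S : Finset (GaleFacet k a)) :
    GaleNonface k a S ↔ ∃ i < 2 * k + 1, arcFacets k a i ⊆ S := by
  rw [GaleNonface, ← Set.image_image (gonPt k) Sigma.fst]
  constructor
  · intro h0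
    obtain ⟨i, hi⟩ := exists_disjoint_gonArc_of_zero_notMem_convexHull h0
    refine ⟨i % (2 * k + 1), Nat.mod_lt _ (by omega), fun x hx => ?_⟩
    rw [mem_arcFacets, gonArc_mod] at hx
    by_contra hxS
    exact hi _ hx ⟨x, hxS, rfl⟩
  · rintro ⟨i, -, hS⟩
    refine zero_notMem_convexHull_of_disjoint_gonArc i ?_
    rintro _ hv ⟨x, hxS, rfl⟩
    exact hxS (hS (mem_arcFacets.2 hv))

lemma gonArc_subset_of_arcFacets_subset (hpos : ∀ i < 2 * k + 1, 0 < a i) {i i' : ℕ}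
    (h : arcFacets k a i ⊆ arcFacets k a i') : gonArc k i ⊆ gonArc k i' := fun v hv =>
  mem_arcFacets.1 (h (x := ⟨v, ⟨0, hpos v v.isLt⟩⟩) (mem_arcFacets.2 hv))

lemma gonArc_eq_of_subset {i i' : ℕ} (h : gonArc k i ⊆ gonArc k i') : gonArc k i = gonArc k i' :=
  eq_of_subset_of_card_le h (by rw [card_gonArc, card_gonArc])

lemma galeMinNonface_iff (hpos : ∀ i < 2 * k + 1, 0 < a i) (S : Finset (GaleFacet k a)) :
    GaleMinNonface k a S ↔ ∃ i < 2 * k + 1, S = arcFacets k a i := by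
  constructor
  · rintro ⟨hS, hmin⟩
    obtain ⟨i, hi, hsub⟩ := (galeNonface_iff S).1 hS
    refine ⟨i, hi, by_contra fun hne => hmin _ (ssubset_of_subset_of_ne hsub (Ne.symm hne)) ?_⟩
    exact (galeNonface_iff _).2 ⟨i, hi, subset_rfl⟩
  · rintro ⟨i, hi, rfl⟩
    refine ⟨(galeNonface_iff _).2 ⟨i, hi, subset_rfl⟩, fun T hT hTS => ?_⟩
    obtain ⟨i', -, hT'⟩ := (galeNonface_iff T).1 hTS
    have harc := gonArc_eq_of_subset (gonArc_subset_of_arcFacets_subset hpos (hT'.trans hT.subset))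
    rw [arcFacets, harc] at hT'
    exact hT.not_subset hT'

lemma arcFacets_injOn (hpos : ∀ i < 2 * k + 1, 0 < a i) :
    Set.InjOn (arcFacets k a) (range (2 * k + 1)) := fun _ hi _ hi' h =>
  eq_of_gonArc_eq (mem_range.1 hi) (mem_range.1 hi')
    (gonArc_eq_of_subset (gonArc_subset_of_arcFacets_subset hpos h.le))

end Facets

theorem stmt_15_general (k : ℕ) (a : ℕ → ℕ)
    (hpos : ∀ i < 2 * k + 1, 0 < a i) (j : ℕ) :
    galeBetti1 k a j =
      ((Finset.range (2 * k + 1)).filter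
        (fun i => ∑ t ∈ Finset.range k, a ((i + t) % (2 * k + 1)) = j)).card := by
  have hset : {S | GaleMinNonface k a S ∧ #S = j} =
      ↑(((range (2 * k + 1)).filter
        fun i => ∑ t ∈ range k, a ((i + t) % (2 * k + 1)) = j).image (arcFacets k a)) := by
    ext S
    simp only [galeMinNonface_iff hpos, Set.mem_ofPred_eq, coe_image, coe_filter, Set.mem_image,
      mem_range]
    constructor
    · rintro ⟨⟨i, hi, rfl⟩, hcard⟩
      exact ⟨i, ⟨hi, card_arcFacets i ▸ hcard⟩, rfl⟩
    · rintro ⟨i, ⟨hi, hsum⟩, rfl⟩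
      exact ⟨⟨i, hi, rfl⟩, card_arcFacets i ▸ hsum⟩
  rw [galeBetti1, hset, Set.ncard_coe_finset,
    card_image_of_injOn ((arcFacets_injOn hpos).mono (coe_subset.2 (filter_subset _ _)))]

/-- For the `n`-dimensional simple polytope `P` with `n+3` facets represented on
the regular `(2k+1)`-gon with assigned positive numbers `[a_1,…,a_{2k+1}]`,
`β^{-1,2j}(P)` equals the number of indices `i` with
`a_i + a_{i+1} + ⋯ + a_{i+k-1} = j` (indices mod `2k+1`). -/
theorem stmt_15 (k n : ℕ) (hk : 2 ≤ k) (a : ℕ → ℕ)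
    (hpos : ∀ i < 2 * k + 1, 0 < a i)
    (hsum : ∑ i ∈ Finset.range (2 * k + 1), a i = n + 3) (j : ℕ) :
    galeBetti1 k a j =
      ((Finset.range (2 * k + 1)).filter
        (fun i => ∑ t ∈ Finset.range k, a ((i + t) % (2 * k + 1)) = j)).card :=
  stmt_15_general k a hpos j
end
end

section
/- In (Z/2)[x,y,z], let I be the ideal generated by (x^2*y^2 + y^2*z^2, y^4, y^2*z + z^3, x*z, x^3). Then the multiset of orders of the seven nonzero linear forms (x, y, z, x+y, x+z, y+z, x+y+z) modulo I is {3, 4, 5, 4, 5, 6, 6}. -/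
open MvPolynomial

namespace Stmt18
abbrev P := MvPolynomial (Fin 3) (ZMod 2)

noncomputable def M (a b c : ℕ) : Fin 3 →₀ ℕ :=
  Finsupp.single 0 a + Finsupp.single 1 b + Finsupp.single 2 c

@[simp] lemma Mapp0 (a b c : ℕ) : M a b c 0 = a := by simp [M, Finsupp.single_apply]
@[simp] lemma Mapp1 (a b c : ℕ) : M a b c 1 = b := by simp [M, Finsupp.single_apply]
@[simp] lemma Mapp2 (a b c : ℕ) : M a b c 2 = c := by simp [M, Finsupp.single_apply]
@[simp] lemma Msub0 (a b c : ℕ) : M a b c - Finsupp.single 0 1 = M (a-1) b c := by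
  ext i; fin_cases i <;> simp [M, Finsupp.single_apply, Finsupp.tsub_apply]
@[simp] lemma Msub1 (a b c : ℕ) : M a b c - Finsupp.single 1 1 = M a (b-1) c := by
  ext i; fin_cases i <;> simp [M, Finsupp.single_apply, Finsupp.tsub_apply]
@[simp] lemma Msub2 (a b c : ℕ) : M a b c - Finsupp.single 2 1 = M a b (c-1) := by
  ext i; fin_cases i <;> simp [M, Finsupp.single_apply, Finsupp.tsub_apply]
@[simp] lemma M000 : M 0 0 0 = 0 := by ext i; fin_cases i <;> simp

noncomputable def L (f : P) : ZMod 2 :=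
  coeff (M 0 1 4) f + coeff (M 0 3 2) f + coeff (M 2 3 0) f

lemma L_add (f g : P) : L (f + g) = L f + L g := by simp [L, coeff_add]; ring

lemma L_g0 (p : P) : L (p * (X 0^2 * X 1^2 + X 1^2 * X 2^2)) = 0 := by
  have e : p * (X 0^2 * X 1^2 + X 1^2 * X 2^2)
      = (((p*X 0)*X 0)*X 1)*X 1 + (((p*X 1)*X 1)*X 2)*X 2 := by ring
  rw [e, L_add]
  simp [L, coeff_mul_X', Finsupp.mem_support_iff, CharTwo.add_self_eq_zero]

lemma L_g1 (p : P) : L (p * (X 1^4)) = 0 := by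
  have e : p * (X 1^4) = (((p*X 1)*X 1)*X 1)*X 1 := by ring
  rw [e]
  simp [L, coeff_mul_X', Finsupp.mem_support_iff, CharTwo.add_self_eq_zero]

lemma L_g2 (p : P) : L (p * (X 1^2 * X 2 + X 2^3)) = 0 := by
  have e : p * (X 1^2 * X 2 + X 2^3) = ((p*X 1)*X 1)*X 2 + ((p*X 2)*X 2)*X 2 := by ring
  rw [e, L_add]
  simp [L, coeff_mul_X', Finsupp.mem_support_iff, CharTwo.add_self_eq_zero]

lemma L_g3 (p : P) : L (p * (X 0 * X 2)) = 0 := by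
  have e : p * (X 0 * X 2) = (p*X 0)*X 2 := by ring
  rw [e]
  simp [L, coeff_mul_X', Finsupp.mem_support_iff, CharTwo.add_self_eq_zero]

lemma L_g4 (p : P) : L (p * (X 0^3)) = 0 := by
  have e : p * (X 0^3) = ((p*X 0)*X 0)*X 0 := by ring
  rw [e]
  simp [L, coeff_mul_X', Finsupp.mem_support_iff, CharTwo.add_self_eq_zero]

noncomputable def N : Ideal P where
  carrier := {f | ∀ p : P, L (p * f) = 0}
  add_mem' := by
    intro a b ha hb p
    rw [mul_add, L_add, ha p, hb p, add_zero]
  zero_mem' := by intro p; simp [L]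
  smul_mem' := by
    intro c f hf p
    have : p * (c • f) = (p * c) * f := by
      rw [smul_eq_mul]; ring
    rw [smul_eq_mul] at this ⊢
    rw [this]
    exact hf (p * c)

lemma L_vanish (I : Ideal P)
    (hI : I = Ideal.span {X 0 ^ 2 * X 1 ^ 2 + X 1 ^ 2 * X 2 ^ 2, X 1 ^ 4,
      X 1 ^ 2 * X 2 + X 2 ^ 3, X 0 * X 2, X 0 ^ 3}) :
    ∀ f ∈ I, L f = 0 := by
  intro f hf
  have hle : I ≤ N := by
    rw [hI, Ideal.span_le]
    rintro g (rfl|rfl|rfl|rfl|rfl)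
    · exact L_g0
    · exact L_g1
    · exact L_g2
    · exact L_g3
    · exact L_g4
  have := hle hf 1
  rwa [one_mul] at this

lemma socle_not_mem (I : Ideal P)
    (hI : I = Ideal.span {X 0 ^ 2 * X 1 ^ 2 + X 1 ^ 2 * X 2 ^ 2, X 1 ^ 4,
      X 1 ^ 2 * X 2 + X 2 ^ 3, X 0 * X 2, X 0 ^ 3}) :
    (X 1 * X 2^4 : P) ∉ I := by
  intro h
  have h0 := L_vanish I hI _ h
  have h1 : L (X 1 * X 2^4 : P) = 1 := by
    have e : (X 1 * X 2^4 : P) = (((((1:P)*X 1)*X 2)*X 2)*X 2)*X 2 := by ring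
    rw [e]
    have hM : M 0 1 0 = Finsupp.single 1 1 := by
      ext i; fin_cases i <;> simp [M, Finsupp.single_apply]
    simp [L, coeff_mul_X', Finsupp.mem_support_iff, hM, coeff_X]
  rw [h0] at h1
  exact one_ne_zero h1.symm

end Stmt18


set_option maxHeartbeats 2000000 in
open Stmt18 in
/-- Case B₉ (also B₁₉, B₂₀): with `I = (x²y²+y²z², y⁴, y²z+z³, xz, x³)` in
`(Z/2)[x,y,z]`, the orders of the seven nonzero linear forms
`x, y, z, x+y, x+z, y+z, x+y+z` are `3, 4, 5, 4, 5, 6, 6` respectively, so their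
multiset of orders is `{3,4,5,4,5,6,6}`. Here `x = X 0`, `y = X 1`, `z = X 2`. -/
theorem stmt_18 (I : Ideal (MvPolynomial (Fin 3) (ZMod 2)))
    (hI : I = Ideal.span {X 0 ^ 2 * X 1 ^ 2 + X 1 ^ 2 * X 2 ^ 2, X 1 ^ 4,
      X 1 ^ 2 * X 2 + X 2 ^ 3, X 0 * X 2, X 0 ^ 3})
    (x y z : MvPolynomial (Fin 3) (ZMod 2)) (hx : x = X 0) (hy : y = X 1) (hz : z = X 2) :
    (x ^ 3 ∈ I ∧ x ^ 2 ∉ I) ∧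
    (y ^ 4 ∈ I ∧ y ^ 3 ∉ I) ∧
    (z ^ 5 ∈ I ∧ z ^ 4 ∉ I) ∧
    ((x + y) ^ 4 ∈ I ∧ (x + y) ^ 3 ∉ I) ∧
    ((x + z) ^ 5 ∈ I ∧ (x + z) ^ 4 ∉ I) ∧
    ((y + z) ^ 6 ∈ I ∧ (y + z) ^ 5 ∉ I) ∧
    ((x + y + z) ^ 6 ∈ I ∧ (x + y + z) ^ 5 ∉ I) := by
  subst hx hy hz
  have two0 : (2 : P) = 0 := by
    rw [← map_ofNat (C : ZMod 2 →+* P) 2, show (2 : ZMod 2) = 0 by decide, map_zero]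
  have hg0 : (X 0 ^ 2 * X 1 ^ 2 + X 1 ^ 2 * X 2 ^ 2 : P) ∈ I := by
    rw [hI]; exact Ideal.subset_span (by simp)
  have hg1 : (X 1 ^ 4 : P) ∈ I := by
    rw [hI]; exact Ideal.subset_span (by simp)
  have hg2 : (X 1 ^ 2 * X 2 + X 2 ^ 3 : P) ∈ I := by
    rw [hI]; exact Ideal.subset_span (by simp)
  have hg3 : (X 0 * X 2 : P) ∈ I := by
    rw [hI]; exact Ideal.subset_span (by simp)
  have hg4 : (X 0 ^ 3 : P) ∈ I := by
    rw [hI]; exact Ideal.subset_span (by simp)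
  have hmx : (X 0 ^ 3 : P) ∈ I := by
    have h : (X 0 ^ 3 : P) = ((X 0 ^ 3)) + 2 * (0) := by ring
    rw [h, two0, zero_mul]
    simp only [add_zero]
    exact hg4
  have hmy : (X 1 ^ 4 : P) ∈ I := by
    have h : (X 1 ^ 4 : P) = ((X 1 ^ 4)) + 2 * (0) := by ring
    rw [h, two0, zero_mul]
    simp only [add_zero]
    exact hg1
  have hmz : (X 2 ^ 5 : P) ∈ I := by
    have h : (X 2 ^ 5 : P) = (X 2 * (X 1 ^ 4) + X 2^2 * (X 1 ^ 2 * X 2 + X 2 ^ 3) + X 1^2 * (X 1 ^ 2 * X 2 + X 2 ^ 3)) + 2 * (-X 1^2*X 2^3 - X 1^4*X 2) := by ring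
    rw [h, two0, zero_mul]
    simp only [add_zero]
    exact (Ideal.add_mem I (Ideal.add_mem I (I.mul_mem_left (X 2) hg1) (I.mul_mem_left (X 2^2) hg2)) (I.mul_mem_left (X 1^2) hg2))
  have hmxy : ((X 0 + X 1) ^ 4 : P) ∈ I := by
    have h : ((X 0 + X 1) ^ 4 : P) = ((X 1 ^ 4) + X 0 * (X 0 ^ 3)) + 2 * (2*X 0*X 1^3 + 3*X 0^2*X 1^2 + 2*X 0^3*X 1) := by ring
    rw [h, two0, zero_mul]
    simp only [add_zero]
    exact (Ideal.add_mem I hg1 (I.mul_mem_left (X 0) hg4))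
  have hmxz : ((X 0 + X 2) ^ 5 : P) ∈ I := by
    have h : ((X 0 + X 2) ^ 5 : P) = (X 2 * (X 1 ^ 4) + X 2^2 * (X 1 ^ 2 * X 2 + X 2 ^ 3) + X 1^2 * (X 1 ^ 2 * X 2 + X 2 ^ 3) + X 2^3 * (X 0 * X 2) + X 0^3 * (X 0 * X 2) + X 0^2 * (X 0 ^ 3)) + 2 * (-X 1^2*X 2^3 - X 1^4*X 2 + 2*X 0*X 2^4 + 5*X 0^2*X 2^3 + 5*X 0^3*X 2^2 + 2*X 0^4*X 2) := by ring
    rw [h, two0, zero_mul]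
    simp only [add_zero]
    exact (Ideal.add_mem I (Ideal.add_mem I (Ideal.add_mem I (Ideal.add_mem I (Ideal.add_mem I (I.mul_mem_left (X 2) hg1) (I.mul_mem_left (X 2^2) hg2)) (I.mul_mem_left (X 1^2) hg2)) (I.mul_mem_left (X 2^3) hg3)) (I.mul_mem_left (X 0^3) hg3)) (I.mul_mem_left (X 0^2) hg4))
  have hmyz : ((X 1 + X 2) ^ 6 : P) ∈ I := by
    have h : ((X 1 + X 2) ^ 6 : P) = (X 2^2 * (X 1 ^ 4) + X 1^2 * (X 1 ^ 4) + X 2^3 * (X 1 ^ 2 * X 2 + X 2 ^ 3)) + 2 * (3*X 1*X 2^5 + 7*X 1^2*X 2^4 + 10*X 1^3*X 2^3 + 7*X 1^4*X 2^2 + 3*X 1^5*X 2) := by ring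
    rw [h, two0, zero_mul]
    simp only [add_zero]
    exact (Ideal.add_mem I (Ideal.add_mem I (I.mul_mem_left (X 2^2) hg1) (I.mul_mem_left (X 1^2) hg1)) (I.mul_mem_left (X 2^3) hg2))
  have hmxyz : ((X 0 + X 1 + X 2) ^ 6 : P) ∈ I := by
    have h : ((X 0 + X 1 + X 2) ^ 6 : P) = (X 1^2 * (X 0 ^ 2 * X 1 ^ 2 + X 1 ^ 2 * X 2 ^ 2) + X 0^2 * (X 0 ^ 2 * X 1 ^ 2 + X 1 ^ 2 * X 2 ^ 2) + X 1^2 * (X 1 ^ 4) + X 2^3 * (X 1 ^ 2 * X 2 + X 2 ^ 3) + X 0^2*X 2 * (X 1 ^ 2 * X 2 + X 2 ^ 3) + X 0^3*X 2 * (X 0 * X 2) + X 0^3 * (X 0 ^ 3)) + 2 * (3*X 1*X 2^5 + 7*X 1^2*X 2^4 + 10*X 1^3*X 2^3 + 7*X 1^4*X 2^2 + 3*X 1^5*X 2 + 3*X 0*X 2^5 + 15*X 0*X 1*X 2^4 + 30*X 0*X 1^2*X 2^3 + 30*X 0*X 1^3*X 2^2 + 15*X 0*X 1^4*X 2 + 3*X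 0*X 1^5 + 7*X 0^2*X 2^4 + 30*X 0^2*X 1*X 2^3 + 44*X 0^2*X 1^2*X 2^2 + 30*X 0^2*X 1^3*X 2 + 7*X 0^2*X 1^4 + 10*X 0^3*X 2^3 + 30*X 0^3*X 1*X 2^2 + 30*X 0^3*X 1^2*X 2 + 10*X 0^3*X 1^3 + 7*X 0^4*X 2^2 + 15*X 0^4*X 1*X 2 + 7*X 0^4*X 1^2 + 3*X 0^5*X 2 + 3*X 0^5*X 1) := by ring
    rw [h, two0, zero_mul]
    simp only [add_zero]
    exact (Ideal.add_mem I (Ideal.add_mem I (Ideal.add_mem I (Ideal.add_mem I (Ideal.add_mem I (Ideal.add_mem I (I.mul_mem_left (X 1^2) hg0) (I.mul_mem_left (X 0^2) hg0)) (I.mul_mem_left (X 1^2) hg1)) (I.mul_mem_left (X 2^3) hg2)) (I.mul_mem_left (X 0^2*X 2) hg2)) (I.mul_mem_left (X 0^3*X 2) hg3)) (I.mul_mem_left (X 0^3) hg4))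
  have hnx : (X 0 ^ 2 : P) ∉ I := by
    intro hTT
    apply Stmt18.socle_not_mem I hI
    have h : (X 1 * X 2^4 : P) = X 0 ^ 2 * X 1^3 + (X 1 * (X 0 ^ 2 * X 1 ^ 2 + X 1 ^ 2 * X 2 ^ 2) + X 1*X 2 * (X 1 ^ 2 * X 2 + X 2 ^ 3)) + 2 * (-X 1^3*X 2^2 - X 0^2*X 1^3) := by ring
    rw [h, two0, zero_mul]
    simp only [add_zero]
    exact Ideal.add_mem I (I.mul_mem_right (X 1^3) hTT) (Ideal.add_mem I (I.mul_mem_left (X 1) hg0) (I.mul_mem_left (X 1*X 2) hg2))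
  have hny : (X 1 ^ 3 : P) ∉ I := by
    intro hTT
    apply Stmt18.socle_not_mem I hI
    have h : (X 1 * X 2^4 : P) = X 1 ^ 3 * X 2^2 + (X 1*X 2 * (X 1 ^ 2 * X 2 + X 2 ^ 3)) + 2 * (-X 1^3*X 2^2) := by ring
    rw [h, two0, zero_mul]
    simp only [add_zero]
    exact Ideal.add_mem I (I.mul_mem_right (X 2^2) hTT) (I.mul_mem_left (X 1*X 2) hg2)
  have hnz : (X 2 ^ 4 : P) ∉ I := by
    intro hTT
    apply Stmt18.socle_not_mem I hI
    have h : (X 1 * X 2^4 : P) = X 2 ^ 4 * X 1 + (0) + 2 * (0) := by ring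
    rw [h, two0, zero_mul]
    simp only [add_zero]
    exact (I.mul_mem_right (X 1) hTT)
  have hnxy : ((X 0 + X 1) ^ 3 : P) ∉ I := by
    intro hTT
    apply Stmt18.socle_not_mem I hI
    have h : (X 1 * X 2^4 : P) = (X 0 + X 1) ^ 3 * X 2^2 + (X 1*X 2 * (X 1 ^ 2 * X 2 + X 2 ^ 3) + X 0*X 2 * (X 1 ^ 2 * X 2 + X 2 ^ 3) + X 2^3 * (X 0 * X 2) + X 0*X 1*X 2 * (X 0 * X 2) + X 0^2*X 2 * (X 0 * X 2)) + 2 * (-X 1^3*X 2^2 - X 0*X 2^4 - 2*X 0*X 1^2*X 2^2 - 2*X 0^2*X 1*X 2^2 - X 0^3*X 2^2) := by ring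
    rw [h, two0, zero_mul]
    simp only [add_zero]
    exact Ideal.add_mem I (I.mul_mem_right (X 2^2) hTT) (Ideal.add_mem I (Ideal.add_mem I (Ideal.add_mem I (Ideal.add_mem I (I.mul_mem_left (X 1*X 2) hg2) (I.mul_mem_left (X 0*X 2) hg2)) (I.mul_mem_left (X 2^3) hg3)) (I.mul_mem_left (X 0*X 1*X 2) hg3)) (I.mul_mem_left (X 0^2*X 2) hg3))
  have hnxz : ((X 0 + X 2) ^ 4 : P) ∉ I := by
    intro hTT
    apply Stmt18.socle_not_mem I hI
    have h : (X 1 * X 2^4 : P) = (X 0 + X 2) ^ 4 * X 1 + (X 0*X 1 * (X 0 ^ 3)) + 2 * (-2*X 0*X 1*X 2^3 - 3*X 0^2*X 1*X 2^2 - 2*X 0^3*X 1*X 2 - X 0^4*X 1) := by ring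
    rw [h, two0, zero_mul]
    simp only [add_zero]
    exact Ideal.add_mem I (I.mul_mem_right (X 1) hTT) (I.mul_mem_left (X 0*X 1) hg4)
  have hnyz : ((X 1 + X 2) ^ 5 : P) ∉ I := by
    intro hTT
    apply Stmt18.socle_not_mem I hI
    have h : (X 1 * X 2^4 : P) = (X 1 + X 2) ^ 5 + (X 1 * (X 1 ^ 4) + X 2^2 * (X 1 ^ 2 * X 2 + X 2 ^ 3) + X 1^2 * (X 1 ^ 2 * X 2 + X 2 ^ 3)) + 2 * (-X 2^5 - 2*X 1*X 2^4 - 6*X 1^2*X 2^3 - 5*X 1^3*X 2^2 - 3*X 1^4*X 2 - X 1^5) := by ring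
    rw [h, two0, zero_mul]
    simp only [add_zero]
    exact Ideal.add_mem I hTT (Ideal.add_mem I (Ideal.add_mem I (I.mul_mem_left (X 1) hg1) (I.mul_mem_left (X 2^2) hg2)) (I.mul_mem_left (X 1^2) hg2))
  have hnxyz : ((X 0 + X 1 + X 2) ^ 5 : P) ∉ I := by
    intro hTT
    apply Stmt18.socle_not_mem I hI
    have h : (X 1 * X 2^4 : P) = (X 0 + X 1 + X 2) ^ 5 + (X 1 * (X 1 ^ 4) + X 0 * (X 1 ^ 4) + X 2^2 * (X 1 ^ 2 * X 2 + X 2 ^ 3) + X 1^2 * (X 1 ^ 2 * X 2 + X 2 ^ 3) + X 2^3 * (X 0 * X 2) + X 0^3 * (X 0 * X 2) + X 0*X 1 * (X 0 ^ 3) + X 0^2 * (X 0 ^ 3)) + 2 * (-X 2^5 - 2*X 1*X 2^4 - 6*X 1^2*X 2^3 - 5*X 1^3*X 2^2 - 3*X 1^4*X 2 - X 1^5 - 3*X 0*X 2^4 - 10*X 0*X 1*X 2^3 - 15*X 0*X 1^2*X 2^2 - 10*X 0*X 1^3*X 2 - 3*X 0*X 1^4 - 5*X 0^2*X 2^3 -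 15*X 0^2*X 1*X 2^2 - 15*X 0^2*X 1^2*X 2 - 5*X 0^2*X 1^3 - 5*X 0^3*X 2^2 - 10*X 0^3*X 1*X 2 - 5*X 0^3*X 1^2 - 3*X 0^4*X 2 - 3*X 0^4*X 1 - X 0^5) := by ring
    rw [h, two0, zero_mul]
    simp only [add_zero]
    exact Ideal.add_mem I hTT (Ideal.add_mem I (Ideal.add_mem I (Ideal.add_mem I (Ideal.add_mem I (Ideal.add_mem I (Ideal.add_mem I (Ideal.add_mem I (I.mul_mem_left (X 1) hg1) (I.mul_mem_left (X 0) hg1)) (I.mul_mem_left (X 2^2) hg2)) (I.mul_mem_left (X 1^2) hg2)) (I.mul_mem_left (X 2^3) hg3)) (I.mul_mem_left (X 0^3) hg3)) (I.mul_mem_left (X 0*X 1) hg4)) (I.mul_mem_left (X 0^2) hg4))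
  exact ⟨⟨hmx, hnx⟩, ⟨hmy, hny⟩, ⟨hmz, hnz⟩, ⟨hmxy, hnxy⟩, ⟨hmxz, hnxz⟩,
    ⟨hmyz, hnyz⟩, ⟨hmxyz, hnxyz⟩⟩
end

section
/- In (Z/2)[x,y,z], let I_A be the ideal generated by (x^3*y + y*z^3, x^2*y + y^3 + y*z^2, y^2*z + z^3, x*z, x^4). Then among the seven nonzero linear forms in x,y,z, exactly x and z have codimension 1 (i.e. annihilate some nonzero linear form modulo I_A), and the codimension of x+z is 3, i.e. (x+z)*δ ∉ I_A for every nonzero homogeneous δ of degree ≤ 2, while some degree-3 homogeneous δ satisfies (x+z)*δ ∈ I_A. -/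
/-!
Everything is read off from coefficient functionals that vanish on `I_A`. In degree 2 the ideal
is spanned by `xz`, so the coefficients of `x², xy, y², yz, z²` vanish on it; in degree 3 so do
the coefficients of `x³` and `xy²` and, over `𝔽₂`, the sums `[x²y] + [y³]`, `[x²y] + [yz²]` and
`[y²z] + [z³]`. A product of two linear forms lying in `I_A` thus gives five quadratic equations
in their coefficient vectors, solved by exhaustion over `𝔽₂³ × 𝔽₂³`. For a quadratic `δ`, the
degree-3 functionals applied to `(x + z)δ` kill every coefficient of `δ` except that of `xz`,
so `δ ∈ I_A`. Finally `(x + z)x³ = x⁴ + x²·xz ∈ I_A`, while the `x³`-coefficient shows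
`x³ ∉ I_A`.
-/

open MvPolynomial

local notation "R₃" => MvPolynomial (Fin 3) (ZMod 2)

theorem MvPolynomial.IsHomogeneous.eq_sum_C_mul_X {σ R : Type*} [Fintype σ] [DecidableEq σ]
    [CommSemiring R] {p : MvPolynomial σ R} (hp : p.IsHomogeneous 1) :
    p = ∑ i, C (coeff (Finsupp.single i 1) p) * X i := by
  ext m
  simp only [coeff_sum, coeff_C_mul, coeff_X, mul_ite, mul_one, mul_zero]
  by_cases hm : m.degree = 1
  · obtain ⟨i, rfl⟩ : m ∈ Set.range (fun i : σ ↦ Finsupp.single i 1) := by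
      rw [Finsupp.range_single_one]; exact hm
    rw [Finset.sum_eq_single i
      (fun j _ hj => if_neg ((Finsupp.single_left_injective one_ne_zero).ne hj)) (by simp),
      if_pos rfl]
  · rw [hp.coeff_eq_zero hm, Finset.sum_eq_zero]
    rintro i -
    rw [if_neg]
    rintro rfl
    simp at hm

noncomputable def exponent (a b c : ℕ) : Fin 3 →₀ ℕ :=
  Finsupp.single 0 a + Finsupp.single 1 b + Finsupp.single 2 c

@[simp] lemma exponent_apply_zero (a b c : ℕ) : exponent a b c 0 = a := by simp [exponent]
@[simp] lemma exponent_apply_one (a b c : ℕ) : exponent a b c 1 = b := by simp [exponent]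
@[simp] lemma exponent_apply_two (a b c : ℕ) : exponent a b c 2 = c := by simp [exponent]

lemma Finsupp.ext_iff_fin_three {d e : Fin 3 →₀ ℕ} :
    d = e ↔ d 0 = e 0 ∧ d 1 = e 1 ∧ d 2 = e 2 := by
  simp [Finsupp.ext_iff, Fin.forall_fin_succ]

lemma eq_exponent (d : Fin 3 →₀ ℕ) : d = exponent (d 0) (d 1) (d 2) := by
  simp [Finsupp.ext_iff_fin_three]

@[simp] lemma exponent_inj {a b c a' b' c' : ℕ} :
    exponent a b c = exponent a' b' c' ↔ a = a' ∧ b = b' ∧ c = c' := by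
  simp [Finsupp.ext_iff_fin_three]

@[simp] lemma exponent_le_exponent {a b c a' b' c' : ℕ} :
    exponent a b c ≤ exponent a' b' c' ↔ a ≤ a' ∧ b ≤ b' ∧ c ≤ c' := by
  simp [Finsupp.le_def, Fin.forall_fin_succ]

@[simp] lemma exponent_add (a b c a' b' c' : ℕ) :
    exponent a b c + exponent a' b' c' = exponent (a + a') (b + b') (c + c') := by
  simp [Finsupp.ext_iff_fin_three]

@[simp] lemma exponent_sub (a b c a' b' c' : ℕ) :
    exponent a b c - exponent a' b' c' = exponent (a - a') (b - b') (c - c') := by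
  simp [Finsupp.ext_iff_fin_three]

@[simp] lemma nsmul_exponent (n a b c : ℕ) :
    n • exponent a b c = exponent (n * a) (n * b) (n * c) := by
  simp [Finsupp.ext_iff_fin_three]

section

variable {R : Type*} [CommSemiring R]

lemma X_zero_eq_monomial : (X 0 : MvPolynomial (Fin 3) R) = monomial (exponent 1 0 0) 1 := by
  simp [exponent, X]

lemma X_one_eq_monomial : (X 1 : MvPolynomial (Fin 3) R) = monomial (exponent 0 1 0) 1 := by
  simp [exponent, X]

lemma X_two_eq_monomial : (X 2 : MvPolynomial (Fin 3) R) = monomial (exponent 0 0 1) 1 := by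
  simp [exponent, X]

end

noncomputable abbrev idealA : Ideal R₃ :=
  Ideal.span {X 0 ^ 3 * X 1 + X 1 * X 2 ^ 3, X 0 ^ 2 * X 1 + X 1 ^ 3 + X 1 * X 2 ^ 2,
    X 1 ^ 2 * X 2 + X 2 ^ 3, X 0 * X 2, X 0 ^ 4}

lemma exists_eq_of_mem_idealA {q : R₃} (hq : q ∈ idealA) :
    ∃ p₁ p₂ p₃ p₄ p₅ : R₃,
      q = p₁ * (X 0 ^ 3 * X 1 + X 1 * X 2 ^ 3) + p₂ * (X 0 ^ 2 * X 1 + X 1 ^ 3 + X 1 * X 2 ^ 2) +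
        p₃ * (X 1 ^ 2 * X 2 + X 2 ^ 3) + p₄ * (X 0 * X 2) + p₅ * X 0 ^ 4 := by
  simp only [Ideal.mem_span_insert, Ideal.mem_span_singleton'] at hq
  obtain ⟨p₁, _, ⟨p₂, _, ⟨p₃, _, ⟨p₄, _, ⟨p₅, rfl⟩, rfl⟩, rfl⟩, rfl⟩, rfl⟩ := hq
  exact ⟨p₁, p₂, p₃, p₄, p₅, by ring⟩

lemma coeff_quadratic_of_mem_idealA {q : R₃} (hq : q ∈ idealA) :
    coeff (exponent 2 0 0) q = 0 ∧ coeff (exponent 1 1 0) q = 0 ∧ coeff (exponent 0 2 0) q = 0 ∧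
      coeff (exponent 0 1 1) q = 0 ∧ coeff (exponent 0 0 2) q = 0 := by
  obtain ⟨p₁, p₂, p₃, p₄, p₅, rfl⟩ := exists_eq_of_mem_idealA hq
  simp [X_zero_eq_monomial, X_one_eq_monomial, X_two_eq_monomial, monomial_pow, monomial_mul,
    mul_add, coeff_mul_monomial']

lemma coeff_cubic_of_mem_idealA {q : R₃} (hq : q ∈ idealA) :
    coeff (exponent 3 0 0) q = 0 ∧ coeff (exponent 1 2 0) q = 0 ∧
      coeff (exponent 2 1 0) q = coeff (exponent 0 3 0) q ∧
      coeff (exponent 2 1 0) q = coeff (exponent 0 1 2) q ∧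
      coeff (exponent 0 2 1) q = coeff (exponent 0 0 3) q := by
  obtain ⟨p₁, p₂, p₃, p₄, p₅, rfl⟩ := exists_eq_of_mem_idealA hq
  simp [X_zero_eq_monomial, X_one_eq_monomial, X_two_eq_monomial, monomial_pow, monomial_mul,
    mul_add, coeff_mul_monomial']

noncomputable abbrev linearForm (v : Fin 3 → ZMod 2) : R₃ :=
  ∑ i, C (v i) * X i

lemma coeff_relations_of_linearForm_mul_mem_idealA {v c : Fin 3 → ZMod 2}
    (h : linearForm v * linearForm c ∈ idealA) :
    v 0 * c 0 = 0 ∧ v 0 * c 1 + v 1 * c 0 = 0 ∧ v 1 * c 1 = 0 ∧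
      v 1 * c 2 + v 2 * c 1 = 0 ∧ v 2 * c 2 = 0 := by
  simpa [Fin.sum_univ_three, X_zero_eq_monomial, X_one_eq_monomial, X_two_eq_monomial,
    C_mul_monomial, monomial_mul, mul_add, add_mul, coeff_monomial, add_comm]
    using coeff_quadratic_of_mem_idealA h

lemma eq_zero_or_of_linearForm_mul_mem_idealA {v c : Fin 3 → ZMod 2} (hc : c ≠ 0)
    (h : linearForm v * linearForm c ∈ idealA) :
    v = 0 ∨ v = ![1, 0, 0] ∨ v = ![0, 0, 1] := by
  have hvc := coeff_relations_of_linearForm_mul_mem_idealA h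
  clear h
  revert v c
  decide

lemma mem_idealA_of_isHomogeneous_two {δ : R₃} (hδ : δ.IsHomogeneous 2)
    (h₂₀₀ : coeff (exponent 2 0 0) δ = 0) (h₁₁₀ : coeff (exponent 1 1 0) δ = 0)
    (h₀₂₀ : coeff (exponent 0 2 0) δ = 0) (h₀₁₁ : coeff (exponent 0 1 1) δ = 0)
    (h₀₀₂ : coeff (exponent 0 0 2) δ = 0) : δ ∈ idealA := by
  have hmono : δ = monomial (exponent 1 0 1) (coeff (exponent 1 0 1) δ) := by
    refine eq_monomial_of_support_subset_singleton fun d hd => ?_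
    have hdeg : d 0 + d 1 + d 2 = 2 := by
      rw [← Fin.sum_univ_three, ← Finsupp.degree_eq_sum, Finsupp.degree_eq_weight_one]
      exact hδ (mem_support_iff.mp hd)
    rw [mem_support_iff] at hd
    rw [eq_exponent d] at hd ⊢
    obtain ⟨h0, h1, h2⟩ | ⟨h0, h1, h2⟩ | ⟨h0, h1, h2⟩ | ⟨h0, h1, h2⟩ | ⟨h0, h1, h2⟩ | ⟨h0, h1, h2⟩ :
        (d 0 = 2 ∧ d 1 = 0 ∧ d 2 = 0) ∨ (d 0 = 1 ∧ d 1 = 1 ∧ d 2 = 0) ∨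
        (d 0 = 0 ∧ d 1 = 2 ∧ d 2 = 0) ∨ (d 0 = 0 ∧ d 1 = 1 ∧ d 2 = 1) ∨
        (d 0 = 0 ∧ d 1 = 0 ∧ d 2 = 2) ∨ (d 0 = 1 ∧ d 1 = 0 ∧ d 2 = 1) := by omega
    all_goals rw [h0, h1, h2] at hd ⊢
    exacts [absurd h₂₀₀ hd, absurd h₁₁₀ hd, absurd h₀₂₀ hd, absurd h₀₁₁ hd, absurd h₀₀₂ hd]
  rw [hmono, ← mul_one (coeff _ δ), ← C_mul_monomial]
  exact Ideal.mul_mem_left _ _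
    (Ideal.subset_span (by simp [X_zero_eq_monomial, X_two_eq_monomial, monomial_mul]))

lemma exists_linearForm_mul_mem_idealA_iff {v : Fin 3 → ZMod 2} (hv : v ≠ 0) :
    (∃ c : Fin 3 → ZMod 2, c ≠ 0 ∧ linearForm v * linearForm c ∈ idealA) ↔
      linearForm v = X 0 ∨ linearForm v = X 2 := by
  constructor
  · rintro ⟨c, hc, h⟩
    rcases eq_zero_or_of_linearForm_mul_mem_idealA hc h with rfl | rfl | rfl
    · exact absurd rfl hv
    · simp [Fin.sum_univ_three]
    · simp [Fin.sum_univ_three]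
  · rintro (h | h) <;> rw [h]
    · exact ⟨![0, 0, 1], by decide, Ideal.subset_span (by simp [Fin.sum_univ_three])⟩
    · exact ⟨![1, 0, 0], by decide, Ideal.subset_span (by simp [Fin.sum_univ_three, mul_comm])⟩

lemma mem_idealA_of_X_zero_add_X_two_mul_mem {δ : R₃}
    (hδ : δ.IsHomogeneous 1 ∨ δ.IsHomogeneous 2) (h : (X 0 + X 2) * δ ∈ idealA) :
    δ ∈ idealA := by
  rcases hδ with hδ | hδ
  · have hδc : δ = linearForm fun i => coeff (Finsupp.single i 1) δ := hδ.eq_sum_C_mul_X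
    rcases eq_or_ne (fun i => coeff (Finsupp.single i 1) δ) 0 with hc | hc
    · rw [hδc, hc]
      simp [linearForm]
    · have hxz : X 0 + X 2 = linearForm ![1, 0, 1] := by simp [Fin.sum_univ_three]
      rw [hδc, hxz] at h
      exact absurd (eq_zero_or_of_linearForm_mul_mem_idealA hc h) (by decide)
  · obtain ⟨h₃₀₀, h₁₂₀, h₂₁₀, h₂₁₀', h₀₂₁⟩ := coeff_cubic_of_mem_idealA h
    refine mem_idealA_of_isHomogeneous_two hδ ?_ ?_ ?_ ?_ ?_ <;>
      simp_all [X_zero_eq_monomial, X_two_eq_monomial, add_mul, coeff_monomial_mul']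

lemma X_zero_pow_three_not_mem_idealA : (X 0 ^ 3 : R₃) ∉ idealA := by
  intro h
  simpa [X_zero_eq_monomial, monomial_pow] using (coeff_cubic_of_mem_idealA h).1

lemma X_zero_add_X_two_mul_X_zero_pow_three_mem_idealA :
    ((X 0 + X 2) * X 0 ^ 3 : R₃) ∈ idealA := by
  have : (X 0 + X 2) * X 0 ^ 3 = (X 0 ^ 4 : R₃) + X 0 ^ 2 * (X 0 * X 2) := by ring
  rw [this]
  exact Ideal.add_mem _ (Ideal.subset_span (by simp))
    (Ideal.mul_mem_left _ _ (Ideal.subset_span (by simp)))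

/-- Case A₁₃: with `I_A = (x³y+yz³, x²y+y³+yz², y²z+z³, xz, x⁴)` in `(Z/2)[x,y,z]`,
among the seven nonzero linear forms exactly `x` and `z` have codimension 1
(i.e. kill some nonzero linear form modulo `I_A`), and `x+z` has codimension 3:
`(x+z)·δ ∉ I_A` for every homogeneous `δ ∉ I_A` of degree 1 or 2, while some
homogeneous `δ ∉ I_A` of degree 3 has `(x+z)·δ ∈ I_A`.
Here `x = X 0`, `y = X 1`, `z = X 2`, and a nonzero linear form is
`∑ i, C (c i) * X i` for `c ≠ 0`. -/
theorem stmt_19 (I : Ideal (MvPolynomial (Fin 3) (ZMod 2)))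
    (hI : I = Ideal.span {X 0 ^ 3 * X 1 + X 1 * X 2 ^ 3,
      X 0 ^ 2 * X 1 + X 1 ^ 3 + X 1 * X 2 ^ 2, X 1 ^ 2 * X 2 + X 2 ^ 3,
      X 0 * X 2, X 0 ^ 4})
    (x y z : MvPolynomial (Fin 3) (ZMod 2)) (hx : x = X 0) (hy : y = X 1) (hz : z = X 2) :
    (∀ γ ∈ ({x, y, z, x + y, x + z, y + z, x + y + z} :
        Set (MvPolynomial (Fin 3) (ZMod 2))),
      ((∃ c : Fin 3 → ZMod 2, c ≠ 0 ∧ γ * (∑ i, C (c i) * X i) ∈ I) ↔ (γ = x ∨ γ = z))) ∧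
    (∀ δ : MvPolynomial (Fin 3) (ZMod 2), δ ∉ I →
      (δ.IsHomogeneous 1 ∨ δ.IsHomogeneous 2) → (x + z) * δ ∉ I) ∧
    (∃ δ : MvPolynomial (Fin 3) (ZMod 2), δ ∉ I ∧ δ.IsHomogeneous 3 ∧ (x + z) * δ ∈ I) := by
  subst hI hx hy hz
  refine ⟨fun γ hγ => ?_, fun δ hδ hdeg h => hδ (mem_idealA_of_X_zero_add_X_two_mul_mem hdeg h),
    X 0 ^ 3, X_zero_pow_three_not_mem_idealA, isHomogeneous_X_pow 0 3,
    X_zero_add_X_two_mul_X_zero_pow_three_mem_idealA⟩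
  obtain ⟨v, hv, rfl⟩ : ∃ v ≠ 0, γ = linearForm v := by
    simp only [Set.mem_insert_iff, Set.mem_singleton_iff] at hγ
    rcases hγ with rfl | rfl | rfl | rfl | rfl | rfl | rfl
    exacts [⟨![1, 0, 0], by decide, by simp [Fin.sum_univ_three]⟩,
      ⟨![0, 1, 0], by decide, by simp [Fin.sum_univ_three]⟩,
      ⟨![0, 0, 1], by decide, by simp [Fin.sum_univ_three]⟩,
      ⟨![1, 1, 0], by decide, by simp [Fin.sum_univ_three]⟩,
      ⟨![1, 0, 1], by decide, by simp [Fin.sum_univ_three]⟩,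
      ⟨![0, 1, 1], by decide, by simp [Fin.sum_univ_three]⟩,
      ⟨![1, 1, 1], by decide, by simp [Fin.sum_univ_three]⟩]
  exact exists_linearForm_mul_mem_idealA_iff hv
end
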